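/- For disjoint compact sets A, B ⊂ ℝⁿ with A ∪ B nonempty, there exists a polynomial p and ε ∈ (0, 2/3) such that p(a) < -ε/2 for all a ∈ A and p(b) > 1 - 3ε/2 for all b ∈ B. -/
import Mathlib


theorem quantitative_poly_separation (n : ℕ) (A B : Set (Fin n → ℝ))
    (hA : IsCompact A) (hB : IsCompact B) (hAB : Disjoint A B)
    (hne : (A ∪ B).Nonempty) :
    ∃ (p : MvPolynomial (Fin n) ℝ) (ε : ℝ), 0 < ε ∧ ε < 2 / 3 ∧
      (∀ a ∈ A, MvPolynomial.eval a p < -(ε / 2)) ∧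
      (∀ b ∈ B, 1 - 3 * ε / 2 < MvPolynomial.eval b p) := by
  -- Urysohn function: g = 0 on A, g = 1 on B
  obtain ⟨g, hg0, hg1, -⟩ :=
    exists_continuous_zero_one_of_isClosed hA.isClosed hB.isClosed hAB
  set K : Set (Fin n → ℝ) := A ∪ B with hK
  have hKc : IsCompact K := hA.union hB
  haveI : CompactSpace K := isCompact_iff_compactSpace.mp hKc
  -- coordinate functions on K
  let coord : Fin n → C(K, ℝ) := fun i =>
    ⟨fun x => (x : Fin n → ℝ) i, (continuous_apply i).comp continuous_subtype_val⟩
  let φ : MvPolynomial (Fin n) ℝ →ₐ[ℝ] C(K, ℝ) := MvPolynomial.aeval coord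
  have hφ : ∀ (p : MvPolynomial (Fin n) ℝ) (x : K),
      φ p x = MvPolynomial.eval (x : Fin n → ℝ) p := by
    intro p x
    induction p using MvPolynomial.induction_on with
    | C r => simp [φ, coord]
    | add p q hp hq => simp [map_add, hp, hq]
    | mul_X p i hp => simp [map_mul, hp, φ, coord]
  have hsep : (φ.range).SeparatesPoints := by
    intro x y hxy
    have : (x : Fin n → ℝ) ≠ (y : Fin n → ℝ) := fun h => hxy (Subtype.ext h)
    obtain ⟨i, hi⟩ := Function.ne_iff.mp this
    refine ⟨coord i, ?_, hi⟩
    exact ⟨coord i, (AlgHom.mem_range φ).mpr ⟨MvPolynomial.X i, by simp [φ]⟩, rfl⟩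
  -- approximate g - 1/2 within 1/4
  obtain ⟨⟨q, hq⟩, hqa⟩ :=
    ContinuousMap.exists_mem_subalgebra_near_continuous_of_separatesPoints
      φ.range hsep (fun x : K => g x - 1/2) (by fun_prop) (1/4) (by norm_num)
  have hqa' : ∀ x : K, ‖q x - (g x - 1/2)‖ < 1/4 := hqa
  obtain ⟨p, rfl⟩ := hq
  simp only [AlgHom.toRingHom_eq_coe, RingHom.coe_coe] at hqa'
  simp only [hφ] at hqa'
  refine ⟨p, 1/2, by norm_num, by norm_num, ?_, ?_⟩
  · intro a ha
    have := hqa' ⟨a, Or.inl ha⟩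
    have h0 : g a = 0 := hg0 ha
    rw [h0, Real.norm_eq_abs, abs_lt] at this
    linarith [this.2]
  · intro b hb
    have := hqa' ⟨b, Or.inr hb⟩
    have h1 : g b = 1 := hg1 hb
    rw [h1, Real.norm_eq_abs, abs_lt] at this
    linarith [this.1]
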